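/- Suppose ν = 2, i.e. c = 4c' with c' odd, gcd(d,c) = 1, r' odd, and d̄ ≡ r' (mod 4) where d̄ inverts d mod c. Then G(2d̄, -r'+d̄, c) = 0. -/
import Mathlib
set_option maxHeartbeats 1000000


open Complex Real Finset

/-- The generalized quadratic Gauss sum `G(A,B,c) = ∑_{n=0}^{c-1} e^{2πi(An²+Bn)/c}`. -/
noncomputable def gaussSumG (A B : ℤ) (c : ℕ) : ℂ :=
  ∑ n ∈ Finset.range c,
    Complex.exp (2 * Real.pi * Complex.I * ((A * (n : ℤ) ^ 2 + B * (n : ℤ) : ℤ) : ℂ) / (c : ℂ))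

/-- If `c = 4c'` with `c'` odd, `gcd(d,c) = 1`, `r'` odd and `d̄ ≡ r' (mod 4)`
(for `d̄` an inverse of `d` mod `c`), then `G(2d̄, -r'+d̄, c) = 0`. -/
theorem gaussSumG_vanishing_nu_two (c' : ℕ) (hc' : Odd c') (c : ℕ) (hc : c = 4 * c')
    (d dbar : ℤ) (hd : Int.gcd d (c : ℤ) = 1) (hinv : d * dbar ≡ 1 [ZMOD (c : ℤ)])
    (r' : ℤ) (hr : Odd r') (hcong : dbar ≡ r' [ZMOD 4]) :
    gaussSumG (2 * dbar) (-r' + dbar) c = 0 := by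
  obtain ⟨k, hk⟩ : (4:ℤ) ∣ dbar - r' := Int.ModEq.dvd hcong.symm
  have hdbar_odd : Odd dbar := by
    obtain ⟨s, hs⟩ := hr
    exact ⟨s + 2*k, by omega⟩
  have hc'odd : Odd (c' : ℤ) := by exact_mod_cast hc'
  obtain ⟨t, ht⟩ : Odd (dbar * (c' : ℤ)) := hdbar_odd.mul hc'odd
  have hc'pos : 0 < c' := hc'.pos
  have hc'ne : (c' : ℂ) ≠ 0 := by exact_mod_cast hc'pos.ne'
  set A : ℤ := 2 * dbar with hA
  set B : ℤ := -r' + dbar with hB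
  set f : ℕ → ℂ := fun n =>
    Complex.exp (2 * Real.pi * Complex.I * ((A * (n : ℤ) ^ 2 + B * (n : ℤ) : ℤ) : ℂ) / (c : ℂ))
    with hf
  have key : ∀ n : ℕ, f (n + c') = - f n := by
    intro n
    have hP : (A * ((n : ℤ) + c') ^ 2 + B * ((n : ℤ) + c'))
        = (A * (n : ℤ) ^ 2 + B * n) + 2 * c' + 4 * c' * (dbar * n + t + k) := by
      rw [hA, hB]
      linear_combination (2 * (c' : ℤ)) * ht + (c' : ℤ) * hk
    have harg : 2 * Real.pi * Complex.I *
          ((A * ((n : ℤ) + c') ^ 2 + B * ((n : ℤ) + c') : ℤ) : ℂ) / (c : ℂ)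
        = 2 * Real.pi * Complex.I * ((A * (n : ℤ) ^ 2 + B * (n : ℤ) : ℤ) : ℂ) / (c : ℂ)
          + ((Real.pi : ℂ) * Complex.I
            + ((dbar * n + t + k : ℤ) : ℂ) * (2 * (Real.pi : ℂ) * Complex.I)) := by
      rw [hc]
      push_cast [hP]
      field_simp
      ring
    have : f (n + c') = f n * (Complex.exp ((Real.pi : ℂ) * Complex.I)
        * Complex.exp (((dbar * n + t + k : ℤ) : ℂ) * (2 * (Real.pi : ℂ) * Complex.I))) := by
      simp only [hf]
      push_cast
      rw [← Complex.exp_add, ← Complex.exp_add]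
      congr 1
      have harg' := harg
      push_cast at harg'
      linear_combination harg'
    rw [this, Complex.exp_pi_mul_I, Complex.exp_int_mul_two_pi_mul_I]
    ring
  have hsum : ∀ m : ℕ, (∑ n ∈ Finset.range (m + c'), f n)
      = (∑ n ∈ Finset.range m, f n) + ∑ n ∈ Finset.range c', f (m + n) :=
    fun m => Finset.sum_range_add f m c'
  have h2 : (∑ n ∈ Finset.range (2 * c'), f n) = 0 := by
    have := Finset.sum_range_add f c' c'
    rw [two_mul, this]
    have : (∑ n ∈ Finset.range c', f (c' + n)) = ∑ n ∈ Finset.range c', - f n := by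
      refine Finset.sum_congr rfl fun n _ => ?_
      rw [Nat.add_comm c' n, key n]
    rw [this, Finset.sum_neg_distrib]
    ring
  have h4 : (∑ n ∈ Finset.range c, f n) = 0 := by
    rw [hc]
    have hsplit := Finset.sum_range_add f (2 * c') (2 * c')
    have h42 : 4 * c' = 2 * c' + 2 * c' := by ring
    rw [h42, hsplit, h2]
    have hper : ∀ n : ℕ, f (2 * c' + n) = f n := by
      intro n
      have h1 := key (n + c')
      have h0 := key n
      have : 2 * c' + n = n + c' + c' := by ring
      rw [this, h1, h0, neg_neg]
    have : (∑ n ∈ Finset.range (2 * c'), f (2 * c' + n)) = ∑ n ∈ Finset.range (2 * c'), f n := by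
      exact Finset.sum_congr rfl fun n _ => hper n
    rw [this, h2]
    ring
  show (∑ n ∈ Finset.range c, f n) = 0
  exact h4
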